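/- arXiv:1608.03686 — 3 statements merged into one kernel-verified Lean document; each statement's English description precedes it below -/
import Mathlib

section
/- Under the noiseless sparse reduced-rank regression setup, each right singular vector is exactly recovered from the corresponding left singular vector by the formula v_k = (1 / (u_kᵀ XᵀX u_k)) · Y*ᵀ X u_k for every k = 1, …, r. -/
/-!
`Y*ᵀ X u_k = C*ᵀ (XᵀX u_k) = ∑_j (u_jᵀ XᵀX u_k) v_j`, and P-orthogonality kills every term except
`j = k`, whose coefficient `u_kᵀ XᵀX u_k = ‖X u_k‖²` is nonzero.
-/

open Matrix

section

variable {ι l m n R : Type*} [Fintype ι] [Fintype l] [Fintype m]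

theorem dotProduct_transpose_mul_self_mulVec [CommSemiring R] (X : Matrix l m R) (u : m → R) :
    u ⬝ᵥ (Xᵀ * X) *ᵥ u = (X *ᵥ u) ⬝ᵥ (X *ᵥ u) := by
  rw [← mulVec_mulVec, dotProduct_mulVec, vecMul_transpose]

theorem dotProduct_transpose_mul_self_mulVec_ne_zero [CommRing R] [LinearOrder R]
    [IsStrictOrderedRing R] (X : Matrix l m R) {u : m → R} (hXu : X *ᵥ u ≠ 0) :
    u ⬝ᵥ (Xᵀ * X) *ᵥ u ≠ 0 := by
  rw [dotProduct_transpose_mul_self_mulVec]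
  exact mt dotProduct_self_eq_zero.mp hXu

theorem transpose_sum_vecMulVec_mulVec [CommSemiring R] (u : ι → m → R) (v : ι → n → R)
    (w : m → R) :
    (∑ i, vecMulVec (u i) (v i))ᵀ *ᵥ w = ∑ i, (u i ⬝ᵥ w) • v i := by
  simp only [transpose_sum, transpose_vecMulVec, sum_mulVec, vecMulVec_mulVec, op_smul_eq_smul]

theorem transpose_sum_vecMulVec_mulVec_of_dotProduct_eq_zero [CommSemiring R]
    (u : ι → m → R) (v : ι → n → R) {w : m → R} {k : ι}
    (horth : ∀ j, j ≠ k → u j ⬝ᵥ w = 0) :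
    (∑ i, vecMulVec (u i) (v i))ᵀ *ᵥ w = (u k ⬝ᵥ w) • v k := by
  rw [transpose_sum_vecMulVec_mulVec, Fintype.sum_eq_single k]
  intro j hj
  rw [horth j hj, zero_smul]

end

theorem seed_right_singular_vector_recovery_general
    {n p q r : ℕ} (X : Matrix (Fin n) (Fin p) ℝ)
    (u : Fin r → (Fin p → ℝ)) (v : Fin r → (Fin q → ℝ))
    (hXu : ∀ k, X *ᵥ u k ≠ 0)
    (hPorth : ∀ j k, j ≠ k → u j ⬝ᵥ ((Xᵀ * X) *ᵥ u k) = 0)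
    (C : Matrix (Fin p) (Fin q) ℝ)
    (hC : C = ∑ k, vecMulVec (u k) (v k))
    (Y : Matrix (Fin n) (Fin q) ℝ) (hY : Y = X * C) :
    ∀ k, v k = (1 / (u k ⬝ᵥ ((Xᵀ * X) *ᵥ u k))) • ((Yᵀ * X) *ᵥ u k) := by
  intro k
  have hY_transpose : Yᵀ * X = Cᵀ * (Xᵀ * X) := by
    rw [hY, transpose_mul, Matrix.mul_assoc]
  have hrecover : (Yᵀ * X) *ᵥ u k = (u k ⬝ᵥ (Xᵀ * X) *ᵥ u k) • v k := by
    rw [hY_transpose, ← mulVec_mulVec, hC,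
      transpose_sum_vecMulVec_mulVec_of_dotProduct_eq_zero u v fun j hj => hPorth j k hj]
  rw [hrecover, one_div, inv_smul_smul₀ (dotProduct_transpose_mul_self_mulVec_ne_zero X (hXu k))]

/-- Under the noiseless setup, each right singular vector is exactly recovered:
`v k = (1 / (u_kᵀ XᵀX u_k)) · Y*ᵀ X u_k`. -/
theorem seed_right_singular_vector_recovery
    {n p q r : ℕ} (X : Matrix (Fin n) (Fin p) ℝ)
    (u : Fin r → (Fin p → ℝ)) (v : Fin r → (Fin q → ℝ))
    (hu_norm : ∀ k, u k ⬝ᵥ u k = 1)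
    (hXu : ∀ k, X *ᵥ u k ≠ 0)
    (hPorth : ∀ j k, j ≠ k → u j ⬝ᵥ ((Xᵀ * X) *ᵥ u k) = 0)
    (hv_ne : ∀ k, v k ≠ 0)
    (hvorth : ∀ j k, j ≠ k → v j ⬝ᵥ v k = 0)
    (C : Matrix (Fin p) (Fin q) ℝ)
    (hC : C = ∑ k, vecMulVec (u k) (v k))
    (Y : Matrix (Fin n) (Fin q) ℝ) (hY : Y = X * C) :
    ∀ k, v k = (1 / (u k ⬝ᵥ ((Xᵀ * X) *ᵥ u k))) • ((Yᵀ * X) *ᵥ u k) :=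
  seed_right_singular_vector_recovery_general X u v hXu hPorth C hC Y hY
end

section
/- A generalized eigenvector reduces the squared Frobenius loss by exactly its eigenvalue: let X be a real n×p matrix, Y a real n×q matrix, and u ∈ ℝ^p with X u ≠ 0 satisfying XᵀYYᵀX u = λ XᵀX u for some real λ. Set v = (1/‖Xu‖₂²) Yᵀ X u. Then ‖Y − X u vᵀ‖_F² = ‖Y‖_F² − λ. -/
/-!
Write `w = X u`, so that `X u vᵀ = w vᵀ` is a rank-one matrix. Expanding the square gives
`‖Y − w vᵀ‖_F² = ‖Y‖_F² − 2 ⟨Yᵀ w, v⟩ + ‖w‖² ‖v‖²`, and for the least-squares choice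
`v = Yᵀ w / ‖w‖²` the last two terms add up to `−‖Yᵀ w‖² / ‖w‖²`. Pairing the generalized
eigenvalue equation with `u` gives `‖Yᵀ w‖² = uᵀ XᵀYYᵀX u = λ uᵀ XᵀX u = λ ‖w‖²`.
-/

open Matrix

/-- The squared Frobenius norm of a real matrix: `‖A‖_F² = Σ_{i,j} A_{ij}²`. -/
def frobSq {m n : Type*} [Fintype m] [Fintype n] (A : Matrix m n ℝ) : ℝ :=
  ∑ i, ∑ j, (A i j) ^ 2

section

variable {m n : Type*} [Fintype m] [Fintype n]

theorem frobSq_sub_vecMulVec (A : Matrix m n ℝ) (w : m → ℝ) (v : n → ℝ) :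
    frobSq (A - vecMulVec w v) = frobSq A - 2 * ((Aᵀ *ᵥ w) ⬝ᵥ v) + (w ⬝ᵥ w) * (v ⬝ᵥ v) := by
  have cross : ∑ i, ∑ j, A i j * w i * v j = (Aᵀ *ᵥ w) ⬝ᵥ v := by
    rw [Finset.sum_comm]
    simp only [dotProduct, mulVec, transpose_apply, Finset.sum_mul]
  have square : ∑ i, w i ^ 2 * ∑ j, v j ^ 2 = (w ⬝ᵥ w) * (v ⬝ᵥ v) := by
    simp only [dotProduct, ← sq, Finset.sum_mul]
  have expand : ∀ i j, (A i j - w i * v j) ^ 2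
      = A i j ^ 2 - 2 * (A i j * w i * v j) + w i ^ 2 * v j ^ 2 := fun _ _ => by ring
  simp only [frobSq, Matrix.sub_apply, vecMulVec_apply, expand, Finset.sum_add_distrib,
    Finset.sum_sub_distrib, ← Finset.mul_sum, cross, square]

theorem dotProduct_transpose_mul_self_mulVec_s10 (A : Matrix m n ℝ) (x : n → ℝ) :
    x ⬝ᵥ (Aᵀ * A) *ᵥ x = (A *ᵥ x) ⬝ᵥ (A *ᵥ x) := by
  rw [← mulVec_mulVec, dotProduct_mulVec, vecMul_transpose]

theorem frobSq_sub_vecMulVec_smul_transpose_mulVec (A : Matrix m n ℝ) (w : m → ℝ) :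
    frobSq (A - vecMulVec w ((1 / (w ⬝ᵥ w)) • (Aᵀ *ᵥ w)))
      = frobSq A - (Aᵀ *ᵥ w) ⬝ᵥ (Aᵀ *ᵥ w) / (w ⬝ᵥ w) := by
  rw [frobSq_sub_vecMulVec]
  by_cases hww : w ⬝ᵥ w = 0
  · simp only [hww, div_zero, zero_smul, dotProduct_zero, mul_zero, sub_zero, add_zero]
  simp only [dotProduct_smul, smul_dotProduct, smul_eq_mul]
  field_simp
  ring

end

/-- A generalized eigenvector reduces the squared Frobenius loss by exactly its
eigenvalue: `‖Y − X u vᵀ‖_F² = ‖Y‖_F² − λ`. -/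
theorem seed_generalized_eigenvector_loss_reduction
    {n p q : ℕ} (X : Matrix (Fin n) (Fin p) ℝ) (Y : Matrix (Fin n) (Fin q) ℝ)
    (u : Fin p → ℝ) (hXu : X *ᵥ u ≠ 0) (lam : ℝ)
    (heig : (Xᵀ * Y * Yᵀ * X) *ᵥ u = lam • ((Xᵀ * X) *ᵥ u))
    (v : Fin q → ℝ)
    (hv : v = (1 / ((X *ᵥ u) ⬝ᵥ (X *ᵥ u))) • ((Yᵀ * X) *ᵥ u)) :
    frobSq (Y - X * vecMulVec u v) = frobSq Y - lam := by
  have hYXu : (Yᵀ *ᵥ X *ᵥ u) ⬝ᵥ (Yᵀ *ᵥ X *ᵥ u) = lam * ((X *ᵥ u) ⬝ᵥ (X *ᵥ u)) := by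
    have gram : Xᵀ * Y * Yᵀ * X = (Yᵀ * X)ᵀ * (Yᵀ * X) := by
      simp only [transpose_mul, transpose_transpose, Matrix.mul_assoc]
    have paired := congrArg (u ⬝ᵥ ·) heig
    simp only [gram, dotProduct_smul, smul_eq_mul, dotProduct_transpose_mul_self_mulVec_s10] at paired
    rwa [← mulVec_mulVec] at paired
  rw [mul_vecMulVec, hv, ← mulVec_mulVec, frobSq_sub_vecMulVec_smul_transpose_mulVec, hYXu,
    mul_div_cancel_right₀ _ (dotProduct_self_eq_zero.not.mpr hXu)]
end

section
/- When X has full row rank, the nonzero generalized eigenvalues of the SEED problem coincide with the nonzero eigenvalues of YYᵀ: let X be a real n×p matrix whose associated linear map from ℝ^p to ℝ^n is surjective (equivalently, rank(X) = n), let Y be a real n×q matrix, and let λ ≠ 0 be real. Then there exists a nonzero w ∈ ℝ^n with YYᵀ w = λ w if and only if there exists u ∈ ℝ^p with X u ≠ 0 and XᵀYYᵀX u = λ XᵀX u. -/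
open Matrix

namespace Matrix

variable {m n R : Type*} [Fintype m] [Fintype n]

theorem vecMul_injective_of_surjective_mulVec [Semiring R] [DecidableEq m] {X : Matrix m n R}
    (hX : Function.Surjective X.mulVec) : Function.Injective X.vecMul := by
  intro v w hvw
  funext i
  obtain ⟨u, hu⟩ := hX (Pi.single i 1)
  calc v i = v ⬝ᵥ X *ᵥ u := by rw [hu, dotProduct_single_one]
    _ = w ⬝ᵥ X *ᵥ u := by
      rw [dotProduct_mulVec, dotProduct_mulVec]; exact congrArg (· ⬝ᵥ u) hvw
    _ = w i := by rw [hu, dotProduct_single_one]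

theorem mulVec_transpose_injective_of_surjective_mulVec [CommSemiring R] [DecidableEq m]
    {X : Matrix m n R} (hX : Function.Surjective X.mulVec) :
    Function.Injective Xᵀ.mulVec := by
  simpa only [funext (mulVec_transpose X)] using vecMul_injective_of_surjective_mulVec hX

/-- The correspondence is `w = X u`: surjectivity of `X` lifts `w`, and injectivity of `Xᵀ`
cancels the outer factor of the pencil. -/
theorem exists_mulVec_eq_smul_iff_transpose_mul_mul [CommSemiring R] [DecidableEq m]
    {X : Matrix m n R} (hX : Function.Surjective X.mulVec) (M : Matrix m m R) (c : R) :
    (∃ w, w ≠ 0 ∧ M *ᵥ w = c • w) ↔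
      ∃ u, X *ᵥ u ≠ 0 ∧ (Xᵀ * M * X) *ᵥ u = c • ((Xᵀ * X) *ᵥ u) := by
  have key : ∀ u, (Xᵀ * M * X) *ᵥ u = c • ((Xᵀ * X) *ᵥ u) ↔ M *ᵥ (X *ᵥ u) = c • (X *ᵥ u) := by
    intro u
    rw [← mulVec_mulVec, ← mulVec_mulVec, ← mulVec_mulVec, ← mulVec_smul,
      (mulVec_transpose_injective_of_surjective_mulVec hX).eq_iff]
  constructor
  · rintro ⟨w, hw, hMw⟩
    obtain ⟨u, rfl⟩ := hX w
    exact ⟨u, hw, (key u).2 hMw⟩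
  · rintro ⟨u, hu, hpencil⟩
    exact ⟨X *ᵥ u, hu, (key u).1 hpencil⟩

end Matrix

theorem seed_nonzero_eigenvalues_full_row_rank_general
    {n p q : ℕ} (X : Matrix (Fin n) (Fin p) ℝ)
    (hX : Function.Surjective (fun u : Fin p → ℝ => X *ᵥ u))
    (Y : Matrix (Fin n) (Fin q) ℝ) (lam : ℝ) :
    (∃ w : Fin n → ℝ, w ≠ 0 ∧ (Y * Yᵀ) *ᵥ w = lam • w) ↔
      (∃ u : Fin p → ℝ, X *ᵥ u ≠ 0 ∧
        (Xᵀ * Y * Yᵀ * X) *ᵥ u = lam • ((Xᵀ * X) *ᵥ u)) := by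
  rw [Matrix.mul_assoc Xᵀ Y Yᵀ]
  exact exists_mulVec_eq_smul_iff_transpose_mul_mul hX (Y * Yᵀ) lam

/-- When `X` has full row rank, the nonzero generalized eigenvalues of the SEED
problem `XᵀYYᵀX u = λ XᵀX u` coincide with the nonzero eigenvalues of `YYᵀ`. -/
theorem seed_nonzero_eigenvalues_full_row_rank
    {n p q : ℕ} (X : Matrix (Fin n) (Fin p) ℝ)
    (hX : Function.Surjective (fun u : Fin p → ℝ => X *ᵥ u))
    (Y : Matrix (Fin n) (Fin q) ℝ) (lam : ℝ) (hlam : lam ≠ 0) :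
    (∃ w : Fin n → ℝ, w ≠ 0 ∧ (Y * Yᵀ) *ᵥ w = lam • w) ↔
      (∃ u : Fin p → ℝ, X *ᵥ u ≠ 0 ∧
        (Xᵀ * Y * Yᵀ * X) *ᵥ u = lam • ((Xᵀ * X) *ᵥ u)) :=
  seed_nonzero_eigenvalues_full_row_rank_general X hX Y lam
end
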